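/- Let Ω ⊆ ℂ^N be a pseudoconvex domain for which there exists a point z₀ ∈ Ω such that lim_{z → ∂∞Ω} c_Ω(z, z₀) = ∞, i.e. for every M > 0 there exists a compact set L ⊆ Ω such that c_Ω(z, z₀) > M for all z ∈ Ω \ L. Then Ω is taut. -/

import Mathlib

open Set Filter Topology Metric

noncomputable section

/-- ℂ^N -/
abbrev CN (N : ℕ) := Fin N → ℂ

/-- A domain: a nonempty open connected set. -/
def CNDomain {N : ℕ} (Ω : Set (CN N)) : Prop :=
  IsOpen Ω ∧ IsConnected Ω

/-- The holomorphic hull of `K` with respect to `Ω`. -/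
def holHull {N : ℕ} (Ω K : Set (CN N)) : Set (CN N) :=
  {z | z ∈ Ω ∧ ∀ f : CN N → ℂ, DifferentiableOn ℂ f Ω → ‖f z‖ ≤ ⨆ w ∈ K, ‖f w‖}

/-- `K` is `Ω`-convex if it equals its holomorphic hull w.r.t. `Ω`. -/
def OmegaConvex {N : ℕ} (Ω K : Set (CN N)) : Prop := holHull Ω K = K

/-- Pseudoconvexity, via the solution of the Levi problem: holomorphic convexity. -/
def Pseudoconvex {N : ℕ} (Ω : Set (CN N)) : Prop :=
  ∀ K : Set (CN N), K ⊆ Ω → IsCompact K → IsCompact (holHull Ω K)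

/-- The hull of a compact set `A ⊆ ℂ` with respect to entire functions. -/
def entireHull (A : Set ℂ) : Set ℂ :=
  {w | ∀ f : ℂ → ℂ, Differentiable ℂ f → ‖f w‖ ≤ ⨆ a ∈ A, ‖f a‖}

/-- `U` is a Runge domain with respect to `Ω`: every function holomorphic on `U` is a
locally uniform limit on `U` of (restrictions of) functions holomorphic on `Ω`. -/
def RungeIn {N : ℕ} (U Ω : Set (CN N)) : Prop :=
  ∀ f : CN N → ℂ, DifferentiableOn ℂ f U →
    ∀ K : Set (CN N), K ⊆ U → IsCompact K → ∀ ε : ℝ, 0 < ε →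
      ∃ g : CN N → ℂ, DifferentiableOn ℂ g Ω ∧ ∀ z ∈ K, ‖g z - f z‖ < ε

/-- `C_φ` is hypercyclic with respect to the sequence `(n l)`. -/
def HypercyclicWrt {N : ℕ} (Ω : Set (CN N)) (φ : CN N → CN N) (n : ℕ → ℕ) : Prop :=
  ∃ f : CN N → ℂ, DifferentiableOn ℂ f Ω ∧
    ∀ g : CN N → ℂ, DifferentiableOn ℂ g Ω →
      ∀ K : Set (CN N), K ⊆ Ω → IsCompact K → ∀ ε : ℝ, 0 < ε →
        ∃ l : ℕ, ∀ z ∈ K, ‖f (φ^[n l] z) - g z‖ < ε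

/-- `C_φ` is hereditarily hypercyclic with respect to `(n l)`:
it is hypercyclic with respect to every subsequence. -/
def HereditarilyHypercyclicWrt {N : ℕ} (Ω : Set (CN N)) (φ : CN N → CN N) (n : ℕ → ℕ) : Prop :=
  ∀ k : ℕ → ℕ, StrictMono k → HypercyclicWrt Ω φ (n ∘ k)

/-- A sequence of self-maps of `Ω` is run-away. -/
def RunAway {N : ℕ} (Ω : Set (CN N)) (f : ℕ → CN N → CN N) : Prop :=
  ∀ K : Set (CN N), K ⊆ Ω → IsCompact K → ∀ L : Set (CN N), L ⊆ Ω → IsCompact L →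
    ∃ l : ℕ, Disjoint (f l '' K) L

/-- A sequence of self-maps of `Ω` is compactly divergent. -/
def CompactlyDivergent {N : ℕ} (Ω : Set (CN N)) (f : ℕ → CN N → CN N) : Prop :=
  ∀ K : Set (CN N), K ⊆ Ω → IsCompact K → ∀ L : Set (CN N), L ⊆ Ω → IsCompact L →
    ∃ l₀ : ℕ, ∀ l ≥ l₀, Disjoint (f l '' K) L

/-- The Möbius pseudodistance `c*_Ω(z, w)`. -/
def mobiusDist {N : ℕ} (Ω : Set (CN N)) (z w : CN N) : ℝ :=
  sSup {r : ℝ | ∃ F : CN N → ℂ, DifferentiableOn ℂ F Ω ∧ (∀ x ∈ Ω, ‖F x‖ < 1) ∧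
    F w = 0 ∧ r = ‖F z‖}

/-- The Carathéodory pseudodistance `c_Ω(z, w)`. -/
def caratDist {N : ℕ} (Ω : Set (CN N)) (z w : CN N) : ℝ :=
  Real.log ((1 + mobiusDist Ω z w) / (1 - mobiusDist Ω z w))

/-- `Ω` is a hypercyclic domain: the necessary conditions (c1), (c2), (c3) are
sufficient for hypercyclicity in `Ω`. -/
def HypercyclicDomain {N : ℕ} (Ω : Set (CN N)) : Prop :=
  ∀ φ : CN N → CN N, DifferentiableOn ℂ φ Ω → MapsTo φ Ω Ω →
    ∀ n : ℕ → ℕ, StrictMono n →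
      InjOn φ Ω → RungeIn (φ '' Ω) Ω → RunAway Ω (fun l => φ^[n l]) →
        HypercyclicWrt Ω φ n

/-- A sequence of maps from a planar set `D` to `Ω ⊆ ℂ^N` is compactly divergent. -/
def CompactlyDivergentFrom {N : ℕ} (D : Set ℂ) (Ω : Set (CN N)) (f : ℕ → ℂ → CN N) : Prop :=
  ∀ K : Set ℂ, K ⊆ D → IsCompact K → ∀ L : Set (CN N), L ⊆ Ω → IsCompact L →
    ∃ n₀ : ℕ, ∀ n ≥ n₀, Disjoint (f n '' K) L

/-- `Ω` is taut. -/
def Taut {N : ℕ} (Ω : Set (CN N)) : Prop :=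
  ∀ f : ℕ → ℂ → CN N,
    (∀ n, DifferentiableOn ℂ (f n) (ball (0 : ℂ) 1)) →
    (∀ n, MapsTo (f n) (ball (0 : ℂ) 1) Ω) →
    CompactlyDivergentFrom (ball (0 : ℂ) 1) Ω f ∨
      ∃ k : ℕ → ℕ, StrictMono k ∧ ∃ g : ℂ → CN N,
        DifferentiableOn ℂ g (ball (0 : ℂ) 1) ∧ MapsTo g (ball (0 : ℂ) 1) Ω ∧
        TendstoLocallyUniformlyOn (fun m => f (k m)) g atTop (ball (0 : ℂ) 1)

/-! Holomorphic discs contract the Möbius pseudodistance `c*(·, z₀)` (Schwarz–Pick). Hence it is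
`< 1` on the connected domain `Ω`, uniformly so on compact sets, and a disc `f : 𝔻 → Ω` sending
one point of `|ζ| ≤ r` into a compact `L₀` has `c*(f ζ, z₀) ≤ γ(L₀, r) < 1` on all of `|ζ| ≤ r`.
Since `c_Ω(·, z₀) → ∞` at the boundary, such discs map `|ζ| ≤ r` into one compact subset of `Ω`.
So a sequence of discs that is not compactly divergent has a subsequence that is compactly valued
on compact sets, and Montel's theorem (Arzelà–Ascoli, with the Schwarz lemma giving
equicontinuity) extracts a locally uniformly convergent subsequence. -/

open ComplexConjugate
open scoped Uniformity

/-- The involutive automorphism of the unit disc exchanging `0` and `a`. -/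
def mobius (a z : ℂ) : ℂ := (a - z) / (1 - conj a * z)

/-- `tanh (artanh b + artanh s)`: the sharp bound for `‖mobius a z‖` in terms of `‖a‖`, `‖z‖`. -/
def mobiusAdd (b s : ℝ) : ℝ := (b + s) / (1 + b * s)

section MobiusAdd

variable {b b' s s' : ℝ}

@[simp] lemma zero_mobiusAdd (s : ℝ) : mobiusAdd 0 s = s := by simp [mobiusAdd]

lemma mobiusAdd_nonneg (hb : 0 ≤ b) (hs : 0 ≤ s) : 0 ≤ mobiusAdd b s := by
  unfold mobiusAdd; positivity

lemma mobiusAdd_lt_one (hb : 0 ≤ b) (hb1 : b < 1) (hs : 0 ≤ s) (hs1 : s < 1) :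
    mobiusAdd b s < 1 := by
  rw [mobiusAdd, div_lt_one (by positivity)]
  nlinarith

lemma mobiusAdd_le_mobiusAdd (hb : 0 ≤ b) (hbb : b ≤ b') (hb1 : b' ≤ 1)
    (hs : 0 ≤ s) (hss : s ≤ s') (hs1 : s' ≤ 1) : mobiusAdd b s ≤ mobiusAdd b' s' := by
  rw [mobiusAdd, mobiusAdd, div_le_div_iff₀ (by positivity) (by nlinarith)]
  nlinarith [mul_nonneg (sub_nonneg.2 hbb) (sub_nonneg.2 (by nlinarith : s * s' ≤ 1)),
    mul_nonneg (sub_nonneg.2 hss) (sub_nonneg.2 (by nlinarith : b * b' ≤ 1))]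

lemma one_sub_mobiusAdd_sq (hb : 0 ≤ b) (hs : 0 ≤ s) :
    1 - mobiusAdd b s ^ 2 = (1 - b ^ 2) * (1 - s ^ 2) / (1 + b * s) ^ 2 := by
  rw [mobiusAdd, div_pow, eq_div_iff (by positivity)]
  field_simp
  ring

end MobiusAdd

section Mobius

variable {a z : ℂ}

@[simp] lemma mobius_zero (a : ℂ) : mobius a 0 = a := by simp [mobius]

@[simp] lemma mobius_self (a : ℂ) : mobius a a = 0 := by simp [mobius]

lemma one_sub_conj_mul_ne_zero (ha : ‖a‖ < 1) (hz : ‖z‖ ≤ 1) : 1 - conj a * z ≠ 0 := by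
  refine sub_ne_zero.2 fun h => ?_
  have : ‖conj a * z‖ < 1 := by
    rw [norm_mul, Complex.norm_conj]
    nlinarith [norm_nonneg a, norm_nonneg z]
  simp [← h] at this

lemma norm_one_sub_conj_mul_le (a z : ℂ) : ‖1 - conj a * z‖ ≤ 1 + ‖a‖ * ‖z‖ := by
  simpa [Complex.norm_conj] using norm_sub_le (1 : ℂ) (conj a * z)

lemma one_sub_sq_norm_mobius (ha : ‖a‖ < 1) (hz : ‖z‖ ≤ 1) :
    1 - ‖mobius a z‖ ^ 2 = (1 - ‖a‖ ^ 2) * (1 - ‖z‖ ^ 2) / ‖1 - conj a * z‖ ^ 2 := by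
  have hD : ‖1 - conj a * z‖ ^ 2 ≠ 0 := by simp [one_sub_conj_mul_ne_zero ha hz]
  rw [mobius, norm_div, div_pow, eq_div_iff hD, sub_mul, div_mul_cancel₀ _ hD]
  simp only [Complex.sq_norm, Complex.normSq_apply, Complex.sub_re, Complex.sub_im,
    Complex.mul_re, Complex.mul_im, Complex.one_re, Complex.one_im, Complex.conj_re,
    Complex.conj_im]
  ring

lemma norm_mobius_lt_one (ha : ‖a‖ < 1) (hz : ‖z‖ < 1) : ‖mobius a z‖ < 1 := by
  have hD := one_sub_conj_mul_ne_zero ha hz.le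
  have hpos : 0 < 1 - ‖mobius a z‖ ^ 2 := by
    rw [one_sub_sq_norm_mobius ha hz.le]
    have := norm_nonneg a; have := norm_nonneg z
    exact div_pos (mul_pos (by nlinarith) (by nlinarith)) (by positivity)
  nlinarith [norm_nonneg (mobius a z)]

lemma norm_mobius_le (ha : ‖a‖ < 1) (hz : ‖z‖ < 1) :
    ‖mobius a z‖ ≤ mobiusAdd ‖a‖ ‖z‖ := by
  have hD := one_sub_conj_mul_ne_zero ha hz.le
  have ha' : 0 ≤ 1 - ‖a‖ ^ 2 := by nlinarith [norm_nonneg a]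
  have hz' : 0 ≤ 1 - ‖z‖ ^ 2 := by nlinarith [norm_nonneg z]
  have hsq : 1 - mobiusAdd ‖a‖ ‖z‖ ^ 2 ≤ 1 - ‖mobius a z‖ ^ 2 := by
    rw [one_sub_sq_norm_mobius ha hz.le, one_sub_mobiusAdd_sq (norm_nonneg _) (norm_nonneg _)]
    gcongr
    exact norm_one_sub_conj_mul_le a z
  exact (pow_le_pow_iff_left₀ (norm_nonneg _)
    (mobiusAdd_nonneg (norm_nonneg _) (norm_nonneg _)) two_ne_zero).1 (by linarith)

lemma mobius_mobius (ha : ‖a‖ < 1) (hz : ‖z‖ < 1) : mobius a (mobius a z) = z := by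
  have h1 := one_sub_conj_mul_ne_zero ha hz.le
  have h2 := one_sub_conj_mul_ne_zero ha ha.le
  have hnum : a - (a - z) / (1 - conj a * z) = z * (1 - conj a * a) / (1 - conj a * z) := by
    rw [eq_div_iff h1, sub_mul, div_mul_cancel₀ _ h1]; ring
  have hden : 1 - conj a * ((a - z) / (1 - conj a * z)) =
      (1 - conj a * a) / (1 - conj a * z) := by
    field_simp; ring
  rw [mobius, mobius, hnum, hden, div_div_div_cancel_right₀ h1, mul_div_cancel_right₀ _ h2]

lemma differentiableOn_mobius (ha : ‖a‖ < 1) : DifferentiableOn ℂ (mobius a) (ball 0 1) :=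
  ((differentiableOn_const a).sub differentiableOn_id).div
    ((differentiableOn_const 1).sub (differentiableOn_id.const_mul _))
    fun _ hz => one_sub_conj_mul_ne_zero ha (mem_ball_zero_iff.1 hz).le

lemma mapsTo_mobius (ha : ‖a‖ < 1) : MapsTo (mobius a) (ball 0 1) (ball 0 1) :=
  fun _ hz => mem_ball_zero_iff.2 (norm_mobius_lt_one ha (mem_ball_zero_iff.1 hz))

end Mobius

lemma norm_le_mobiusAdd_of_mapsTo_ball {G : ℂ → ℂ} (hd : DifferentiableOn ℂ G (ball 0 1))
    (hm : MapsTo G (ball 0 1) (ball 0 1)) {w z : ℂ} (hw : ‖w‖ < 1) (hz : ‖z‖ < 1) :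
    ‖G z‖ ≤ mobiusAdd ‖G w‖ (mobiusAdd ‖w‖ ‖z‖) := by
  have hGw : ‖G w‖ < 1 := mem_ball_zero_iff.1 (hm (mem_ball_zero_iff.2 hw))
  have hGz : ‖G z‖ < 1 := mem_ball_zero_iff.1 (hm (mem_ball_zero_iff.2 hz))
  have hH : ‖mobius (G w) (G (mobius w (mobius w z)))‖ ≤ ‖mobius w z‖ :=
    Complex.norm_le_norm_of_mapsTo_ball
      ((differentiableOn_mobius hGw).comp (hd.comp (differentiableOn_mobius hw) (mapsTo_mobius hw))
        ((hm.comp (mapsTo_mobius hw))))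
      (((mapsTo_mobius hGw).comp (hm.comp (mapsTo_mobius hw))).mono_right ball_subset_closedBall)
      (by simp) (norm_mobius_lt_one hw hz)
  rw [mobius_mobius hw hz] at hH
  calc ‖G z‖ = ‖mobius (G w) (mobius (G w) (G z))‖ := by rw [mobius_mobius hGw hGz]
    _ ≤ mobiusAdd ‖G w‖ ‖mobius (G w) (G z)‖ := norm_mobius_le hGw (norm_mobius_lt_one hGw hGz)
    _ ≤ mobiusAdd ‖G w‖ (mobiusAdd ‖w‖ ‖z‖) :=
      mobiusAdd_le_mobiusAdd (norm_nonneg _) le_rfl hGw.le (norm_nonneg _)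
        (hH.trans (norm_mobius_le hw hz))
        (mobiusAdd_lt_one (norm_nonneg _) hw (norm_nonneg _) hz).le

section MobiusDist

variable {N : ℕ} {Ω : Set (CN N)} {z₀ z : CN N}

lemma norm_le_mobiusDist (hz : z ∈ Ω) {F : CN N → ℂ} (hF : DifferentiableOn ℂ F Ω)
    (hF1 : ∀ x ∈ Ω, ‖F x‖ < 1) (hF0 : F z₀ = 0) : ‖F z‖ ≤ mobiusDist Ω z z₀ :=
  le_csSup ⟨1, by rintro _ ⟨_, -, hF1, -, rfl⟩; exact (hF1 z hz).le⟩ ⟨F, hF, hF1, hF0, rfl⟩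

lemma mobiusDist_le {γ : ℝ} (hγ : 0 ≤ γ)
    (h : ∀ F : CN N → ℂ, DifferentiableOn ℂ F Ω → (∀ x ∈ Ω, ‖F x‖ < 1) → F z₀ = 0 → ‖F z‖ ≤ γ) :
    mobiusDist Ω z z₀ ≤ γ :=
  Real.sSup_le (by rintro _ ⟨F, hF, hF1, hF0, rfl⟩; exact h F hF hF1 hF0) hγ

lemma mobiusDist_nonneg (hz : z ∈ Ω) : 0 ≤ mobiusDist Ω z z₀ := by
  simpa using norm_le_mobiusDist (z₀ := z₀) hz (differentiableOn_const 0) (by simp) rfl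

lemma mobiusDist_le_one (hz : z ∈ Ω) : mobiusDist Ω z z₀ ≤ 1 :=
  mobiusDist_le zero_le_one fun _ _ hF1 _ => (hF1 z hz).le

lemma mobiusDist_self_nonpos : mobiusDist Ω z₀ z₀ ≤ 0 :=
  mobiusDist_le le_rfl fun F _ _ hF0 => by simp [hF0]

lemma mobiusDist_apply_le {f : ℂ → CN N} (hf : DifferentiableOn ℂ f (ball 0 1))
    (hfΩ : MapsTo f (ball 0 1) Ω) {w z : ℂ} (hw : ‖w‖ < 1) (hz : ‖z‖ < 1) :
    mobiusDist Ω (f z) z₀ ≤ mobiusAdd (mobiusDist Ω (f w) z₀) (mobiusAdd ‖w‖ ‖z‖) := by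
  have hfw : f w ∈ Ω := hfΩ (mem_ball_zero_iff.2 hw)
  have hs := mobiusAdd_nonneg (norm_nonneg w) (norm_nonneg z)
  refine mobiusDist_le (mobiusAdd_nonneg (mobiusDist_nonneg hfw) hs) fun F hF hF1 hF0 => ?_
  have hG : MapsTo (F ∘ f) (ball 0 1) (ball 0 1) := fun ζ hζ =>
    mem_ball_zero_iff.2 (hF1 _ (hfΩ hζ))
  exact (norm_le_mobiusAdd_of_mapsTo_ball (hF.comp hf hfΩ) hG hw hz).trans
    (mobiusAdd_le_mobiusAdd (norm_nonneg _) (norm_le_mobiusDist hfw hF hF1 hF0)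
      (mobiusDist_le_one hfw) hs le_rfl
      (mobiusAdd_lt_one (norm_nonneg w) hw (norm_nonneg z) hz).le)

lemma mobiusDist_le_mobiusAdd_of_ball_subset {a b : CN N} {δ t : ℝ} (hΩ : ball b δ ⊆ Ω)
    (ht : 0 < t) (ht1 : t < 1) (hab : dist a b < t * δ) :
    mobiusDist Ω a z₀ ≤ mobiusAdd (mobiusDist Ω b z₀) t := by
  set f : ℂ → CN N := fun ζ => b + (ζ / t) • (a - b)
  have hf : DifferentiableOn ℂ f (ball 0 1) := by fun_prop
  have hfΩ : MapsTo f (ball 0 1) Ω := fun ζ hζ => hΩ <| by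
    rw [mem_ball_zero_iff] at hζ
    rw [mem_ball, dist_eq_norm, add_sub_cancel_left, norm_smul, norm_div, Complex.norm_real,
      Real.norm_of_nonneg ht.le, ← dist_eq_norm]
    calc ‖ζ‖ / t * dist a b ≤ 1 / t * dist a b := by gcongr
      _ < δ := by rw [one_div_mul_eq_div, div_lt_iff₀ ht]; linarith
  simpa [f, ht.ne', abs_of_pos ht] using
    mobiusDist_apply_le (z₀ := z₀) hf hfΩ (w := 0) (z := t) (by simp) (by simpa [abs_of_pos ht])

lemma eventually_mobiusDist_le (hΩ : IsOpen Ω) {b : CN N} (hb : b ∈ Ω) :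
    ∀ᶠ x in 𝓝 b, x ∈ Ω ∧ mobiusDist Ω x z₀ ≤ mobiusAdd (mobiusDist Ω b z₀) (1 / 2) ∧
      mobiusDist Ω b z₀ ≤ mobiusAdd (mobiusDist Ω x z₀) (1 / 2) := by
  obtain ⟨δ, hδ, hball⟩ := Metric.isOpen_iff.1 hΩ b hb
  filter_upwards [ball_mem_nhds b (by positivity : 0 < δ / 4)] with x hx
  rw [mem_ball] at hx
  refine ⟨hball (ball_subset_ball (by linarith) (mem_ball.2 hx)),
    mobiusDist_le_mobiusAdd_of_ball_subset hball (by norm_num) (by norm_num) (by linarith),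
    mobiusDist_le_mobiusAdd_of_ball_subset (δ := δ / 2) ((ball_subset_ball' ?_).trans hball)
      (by norm_num) (by norm_num) (by rw [dist_comm]; linarith)⟩
  linarith

lemma mobiusDist_lt_one (hdom : CNDomain Ω) (hz₀ : z₀ ∈ Ω) (hz : z ∈ Ω) :
    mobiusDist Ω z z₀ < 1 := by
  have hhalf : (1 / 2 : ℝ) < 1 := by norm_num
  have hU : IsOpen {x | x ∈ Ω ∧ mobiusDist Ω x z₀ < 1} := by
    refine isOpen_iff_mem_nhds.2 fun a ⟨ha, ha1⟩ => ?_
    filter_upwards [eventually_mobiusDist_le (z₀ := z₀) hdom.1 ha] with x hx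
    exact ⟨hx.1, hx.2.1.trans_lt
      (mobiusAdd_lt_one (mobiusDist_nonneg ha) ha1 (by norm_num) hhalf)⟩
  have hV : IsOpen {x | x ∈ Ω ∧ 1 ≤ mobiusDist Ω x z₀} := by
    refine isOpen_iff_mem_nhds.2 fun a ⟨ha, ha1⟩ => ?_
    filter_upwards [eventually_mobiusDist_le (z₀ := z₀) hdom.1 ha] with x hx
    refine ⟨hx.1, not_lt.1 fun hx1 => (ha1.trans hx.2.2).not_gt ?_⟩
    exact mobiusAdd_lt_one (mobiusDist_nonneg hx.1) hx1 (by norm_num) hhalf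
  refine (hdom.2.isPreconnected.subset_left_of_subset_union hU hV ?_ ?_
    ⟨z₀, hz₀, hz₀, mobiusDist_self_nonpos.trans_lt one_pos⟩ hz).2
  · exact Set.disjoint_left.2 fun x hx hx' => hx.2.not_ge hx'.2
  · exact fun x hx => (lt_or_ge (mobiusDist Ω x z₀) 1).imp (⟨hx, ·⟩) (⟨hx, ·⟩)

lemma exists_mobiusDist_le_of_isCompact (hdom : CNDomain Ω) (hz₀ : z₀ ∈ Ω) {L : Set (CN N)}
    (hL : L ⊆ Ω) (hLc : IsCompact L) :
    ∃ β, 0 ≤ β ∧ β < 1 ∧ ∀ x ∈ L, mobiusDist Ω x z₀ ≤ β := by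
  refine hLc.induction_on ⟨0, le_rfl, one_pos, by simp⟩
    (fun s t hst ⟨β, hβ0, hβ1, hβ⟩ => ⟨β, hβ0, hβ1, fun x hx => hβ x (hst hx)⟩)
    (fun s t ⟨β, hβ0, hβ1, hβ⟩ ⟨β', _, hβ'1, hβ'⟩ => ⟨max β β', le_max_of_le_left hβ0,
      max_lt hβ1 hβ'1, fun x hx => hx.elim (fun hx => (hβ x hx).trans (le_max_left _ _))
        (fun hx => (hβ' x hx).trans (le_max_right _ _))⟩) fun x hx => ?_
  have hxΩ := hL hx
  exact ⟨_, mem_nhdsWithin_of_mem_nhds (eventually_mobiusDist_le hdom.1 hxΩ), _,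
    mobiusAdd_nonneg (mobiusDist_nonneg hxΩ) (by norm_num),
    mobiusAdd_lt_one (mobiusDist_nonneg hxΩ) (mobiusDist_lt_one hdom hz₀ hxΩ) (by norm_num)
      (by norm_num), fun y hy => hy.2.1⟩

lemma caratDist_le_of_mobiusDist_le (hz : z ∈ Ω) {γ : ℝ} (hγ : γ < 1)
    (h : mobiusDist Ω z z₀ ≤ γ) : caratDist Ω z z₀ ≤ Real.log ((1 + γ) / (1 - γ)) := by
  have h0 := mobiusDist_nonneg (z₀ := z₀) hz
  refine Real.log_le_log (div_pos (by linarith) (by linarith)) ?_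
  rw [div_le_div_iff₀ (by linarith) (by linarith)]
  nlinarith

lemma exists_isCompact_mapsTo_of_caratDist (hdom : CNDomain Ω) (hz₀ : z₀ ∈ Ω)
    (hlim : ∀ M : ℝ, 0 < M → ∃ L : Set (CN N), L ⊆ Ω ∧ IsCompact L ∧
      ∀ z ∈ Ω \ L, M < caratDist Ω z z₀)
    {K₀ K : Set ℂ} (hK₀ : K₀ ⊆ ball 0 1) (hK₀c : IsCompact K₀) (hK : K ⊆ ball 0 1)
    (hKc : IsCompact K) {L₀ : Set (CN N)} (hL₀ : L₀ ⊆ Ω) (hL₀c : IsCompact L₀) :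
    ∃ L ⊆ Ω, IsCompact L ∧ ∀ f : ℂ → CN N, DifferentiableOn ℂ f (ball 0 1) →
      MapsTo f (ball 0 1) Ω → ¬Disjoint (f '' K₀) L₀ → MapsTo f K L := by
  obtain ⟨r, ⟨hr0, hr1⟩, hr⟩ := exists_pos_lt_subset_ball one_pos (hK₀c.union hKc).isClosed
    (union_subset hK₀ hK)
  obtain ⟨β, hβ0, hβ1, hβ⟩ := exists_mobiusDist_le_of_isCompact hdom hz₀ hL₀ hL₀c
  set γ := mobiusAdd β (mobiusAdd r r)
  have hrr := mobiusAdd_nonneg hr0.le hr0.le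
  have hrr1 := mobiusAdd_lt_one hr0.le hr1 hr0.le hr1
  have hγ1 : γ < 1 := mobiusAdd_lt_one hβ0 hβ1 hrr hrr1
  obtain ⟨L, hLΩ, hLc, hLM⟩ := hlim (max 1 (Real.log ((1 + γ) / (1 - γ))))
    (lt_max_of_lt_left one_pos)
  refine ⟨L, hLΩ, hLc, fun f hf hfΩ hmeet z hz => ?_⟩
  obtain ⟨_, ⟨w, hw, rfl⟩, hfw⟩ := not_disjoint_iff.1 hmeet
  have hwr : ‖w‖ < r := mem_ball_zero_iff.1 (hr (Or.inl hw))
  have hzr : ‖z‖ < r := mem_ball_zero_iff.1 (hr (Or.inr hz))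
  have hfz : f z ∈ Ω := hfΩ (hK hz)
  by_contra hzL
  have hγ : mobiusDist Ω (f z) z₀ ≤ γ :=
    (mobiusDist_apply_le hf hfΩ (hwr.trans hr1) (hzr.trans hr1)).trans
      (mobiusAdd_le_mobiusAdd (mobiusDist_nonneg (hL₀ hfw)) (hβ _ hfw) hβ1.le
        (mobiusAdd_nonneg (norm_nonneg _) (norm_nonneg _))
        (mobiusAdd_le_mobiusAdd (norm_nonneg _) hwr.le hr1.le (norm_nonneg _) hzr.le hr1.le)
        hrr1.le)
  exact (hLM _ ⟨hfz, hzL⟩).not_ge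
    ((caratDist_le_of_mobiusDist_le hfz hγ1 hγ).trans (le_max_right _ _))

end MobiusDist

section Montel

theorem Equicontinuous.exists_subseq_tendsto {X α : Type*} [TopologicalSpace X]
    [WeaklyLocallyCompactSpace X] [SigmaCompactSpace X] [UniformSpace α]
    [IsCountablyGenerated (𝓤 α)] {F : ℕ → C(X, α)} (heq : Equicontinuous fun n => ⇑(F n))
    (hQ : ∀ x, ∃ Q, IsCompact Q ∧ ∀ n, F n x ∈ Q) :
    ∃ f : C(X, α), ∃ φ : ℕ → ℕ, StrictMono φ ∧ Tendsto (F ∘ φ) atTop (𝓝 f) := by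
  choose Q hQc hFQ using hQ
  set A := closure (range fun n => ⇑(F n))
  have hA : Equicontinuous ((↑) : A → X → α) :=
    Set.Equicontinuous.closure (equicontinuous_iff_range.1 heq)
  have himage : ContinuousMap.toFun '' {h : C(X, α) | ⇑h ∈ A} = A := by
    refine Subset.antisymm (by rintro _ ⟨h, hh, rfl⟩; exact hh) fun u hu => ?_
    exact ⟨⟨u, hA.continuous ⟨u, hu⟩⟩, hu, rfl⟩
  have hS : IsCompact {h : C(X, α) | ⇑h ∈ A} := by
    refine ArzelaAscoli.isCompact_of_equicontinuous _ ?_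
      (hA.comp fun h : {h : C(X, α) | ⇑h ∈ A} => ⟨⇑h.1, h.2⟩)
    rw [himage]
    exact (isCompact_univ_pi hQc).closure_of_subset
      (range_subset_iff.2 fun n => mem_univ_pi.2 fun x => hFQ x n)
  obtain ⟨f, -, φ, hφ, hlim⟩ := hS.tendsto_subseq fun n => subset_closure (mem_range_self n)
  exact ⟨f, φ, hφ, hlim⟩

variable {E F : Type*} [NormedAddCommGroup E] [NormedSpace ℂ E] [NormedAddCommGroup F]
  [NormedSpace ℂ F]

-- By the Schwarz lemma the family is uniformly Lipschitz at `x`.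
theorem equicontinuousAt_of_mapsTo_isBounded {ι : Type*} {g : ι → E → F} {x : E} {R : ℝ}
    (hR : 0 < R) (hd : ∀ i, DifferentiableOn ℂ (g i) (ball x R)) {L : Set F}
    (hL : Bornology.IsBounded L) (hgL : ∀ i, MapsTo (g i) (ball x R) L) :
    EquicontinuousAt g x := by
  refine equicontinuousAt_of_continuity_modulus (fun y => diam L / R * dist y x) ?_ _ ?_
  · exact ((continuous_id.dist continuous_const).const_mul _).tendsto' x 0 (by simp)
  · filter_upwards [ball_mem_nhds x hR] with y hy i
    rw [dist_comm]
    refine Complex.dist_le_div_mul_dist_of_mapsTo_ball (hd i) (fun z hz => ?_) hy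
    exact mem_closedBall.2 (dist_le_diam_of_mem hL (hgL i hz) (hgL i (mem_ball_self hR)))

theorem exists_subseq_tendstoLocallyUniformlyOn_of_mapsTo_isCompact [CompleteSpace F]
    {U : Set ℂ} (hU : IsOpen U) {Ω : Set F} {g : ℕ → ℂ → F}
    (hd : ∀ n, DifferentiableOn ℂ (g n) U)
    (hbdd : ∀ K ⊆ U, IsCompact K → ∃ L ⊆ Ω, IsCompact L ∧ ∀ n, MapsTo (g n) K L) :
    ∃ φ : ℕ → ℕ, StrictMono φ ∧ ∃ h : ℂ → F, DifferentiableOn ℂ h U ∧ MapsTo h U Ω ∧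
      TendstoLocallyUniformlyOn (fun m => g (φ m)) h atTop U := by
  have := hU.locallyCompactSpace
  set G : ℕ → C(U, F) := fun n => ⟨U.domRestrict (g n), (hd n).continuousOn.domRestrict⟩
  have heq : Equicontinuous fun n => ⇑(G n) := by
    rintro ⟨x, hx⟩
    obtain ⟨R, hR, hRU⟩ := nhds_basis_closedBall.mem_iff.1 (hU.mem_nhds hx)
    obtain ⟨L, -, hLc, hgL⟩ := hbdd _ hRU (isCompact_closedBall x R)
    have hc := equicontinuousAt_iff_continuousAt.1 <| equicontinuousAt_of_mapsTo_isBounded hR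
      (fun n => (hd n).mono (ball_subset_closedBall.trans hRU)) hLc.isBounded
      fun n => (hgL n).mono_left ball_subset_closedBall
    exact equicontinuousAt_iff_continuousAt.2
      (hc.comp (x := ⟨x, hx⟩) continuous_subtype_val.continuousAt)
  have hQ : ∀ x : U, ∃ Q, IsCompact Q ∧ ∀ n, G n x ∈ Q := fun x => by
    obtain ⟨L, -, hLc, hgL⟩ := hbdd {x.1} (singleton_subset_iff.2 x.2) isCompact_singleton
    exact ⟨L, hLc, fun n => hgL n rfl⟩
  obtain ⟨f, φ, hφ, hlim⟩ := heq.exists_subseq_tendsto hQ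
  set h : ℂ → F := Function.extend Subtype.val f 0
  have hTLU : TendstoLocallyUniformlyOn (fun m => g (φ m)) h atTop U := by
    rw [tendstoLocallyUniformlyOn_iff_tendstoLocallyUniformly_comp_coe,
      show h ∘ Subtype.val = f from Function.extend_comp Subtype.val_injective _ _]
    exact ContinuousMap.tendsto_iff_tendstoLocallyUniformly.1 hlim
  refine ⟨φ, hφ, h, hTLU.differentiableOn (Eventually.of_forall fun m => hd (φ m)) hU,
    fun x hx => ?_, hTLU⟩
  obtain ⟨L, hLΩ, hLc, hgL⟩ := hbdd {x} (singleton_subset_iff.2 hx) isCompact_singleton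
  exact hLΩ (hLc.isClosed.mem_of_tendsto (hTLU.tendsto_at hx)
    (Eventually.of_forall fun m => hgL (φ m) rfl))

end Montel

theorem stmt_17_general {N : ℕ} (Ω : Set (CN N)) (hdom : CNDomain Ω) (z₀ : CN N) (hz₀ : z₀ ∈ Ω)
    (hlim : ∀ M : ℝ, 0 < M → ∃ L : Set (CN N), L ⊆ Ω ∧ IsCompact L ∧
      ∀ z ∈ Ω \ L, M < caratDist Ω z z₀) :
    Taut Ω := by
  intro f hfd hfm
  refine or_iff_not_imp_left.2 fun hdiv => ?_
  obtain ⟨K₀, hK₀, hK₀c, L₀, hL₀, hL₀c, hfreq⟩ : ∃ K₀ ⊆ ball (0 : ℂ) 1, IsCompact K₀ ∧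
      ∃ L₀ ⊆ Ω, IsCompact L₀ ∧ ∃ᶠ n in atTop, ¬Disjoint (f n '' K₀) L₀ := by
    simpa [CompactlyDivergentFrom, frequently_atTop] using hdiv
  obtain ⟨k, hk, hkL₀⟩ := extraction_of_frequently_atTop hfreq
  obtain ⟨φ, hφ, g, hg⟩ := exists_subseq_tendstoLocallyUniformlyOn_of_mapsTo_isCompact
    isOpen_ball (fun m => hfd (k m)) fun K hK hKc => by
      obtain ⟨L, hLΩ, hLc, hfL⟩ :=
        exists_isCompact_mapsTo_of_caratDist hdom hz₀ hlim hK₀ hK₀c hK hKc hL₀ hL₀c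
      exact ⟨L, hLΩ, hLc, fun m => hfL _ (hfd (k m)) (hfm (k m)) (hkL₀ m)⟩
  exact ⟨k ∘ φ, hk.comp hφ, g, hg⟩

theorem stmt_17 {N : ℕ} (Ω : Set (CN N)) (hdom : CNDomain Ω) (hpsc : Pseudoconvex Ω)
    (z₀ : CN N) (hz₀ : z₀ ∈ Ω)
    (hlim : ∀ M : ℝ, 0 < M → ∃ L : Set (CN N), L ⊆ Ω ∧ IsCompact L ∧
      ∀ z ∈ Ω \ L, M < caratDist Ω z z₀) :
    Taut Ω :=
  stmt_17_general Ω hdom z₀ hz₀ hlim
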